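/- arXiv:2602.23248 — 5 statements merged into one kernel-verified Lean document; each statement's English description precedes it below -/
import Mathlib

section
/- Assume the verifier v : X × Z → [0,1] and faithful translator τ : X → Z satisfy completeness (for all x, if c(x, τ(x)) = 1 then v(x, τ(x)) = 1) and soundness (for all x and all z, if c(x,z) = 0 then v(x,z) = 0). Assume the reward r satisfies r(v₁,1) > r(v₂,0) for all v₁,v₂ and is strictly increasing in its first argument when the second is 1. Then for every x, the value r(v(x, τ(x)), faith(x, τ(x))) is a global maximum over all alternative outputs z of r(v(x,z), faith(x,z)), where faith(x,z) = 1 iff the answer of z equals the solver's answer on x, provided that the solver's answer on x is correct iff c(x,τ(x)) = 1 and τ(x) is faithful. -/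
/-! If the solver is right, completeness gives the faithful translation the top verifier score 1;
if it is wrong, soundness gives every faithful output score 0. Either way no faithful output
scores more than `τ x`, and unfaithful outputs lose to any faithful one by reward separation. -/

open Set

theorem verifier_le_of_complete_of_sound {Z : Type*} {c v : Z → ℝ} {t z : Z}
    (hv : ∀ z, v z ∈ Icc (0 : ℝ) 1) (hcases : c t = 1 ∨ c z = 0)
    (hcomplete : c t = 1 → v t = 1) (hsound : c z = 0 → v z = 0) :
    v z ≤ v t := by
  rcases hcases with ht | hz
  · exact hcomplete ht ▸ (hv z).2
  · exact hsound hz ▸ (hv t).1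

theorem reward_le_of_faithful_le {r : ℝ → ℝ → ℝ}
    (hsep : ∀ a b, a ∈ Icc (0 : ℝ) 1 → b ∈ Icc (0 : ℝ) 1 → r a 1 > r b 0)
    (hmono : StrictMonoOn (r · 1) (Icc 0 1)) {a b f : ℝ}
    (ha : a ∈ Icc (0 : ℝ) 1) (hb : b ∈ Icc (0 : ℝ) 1) (hf : f = 0 ∨ f = 1)
    (hle : f = 1 → a ≤ b) : r a f ≤ r b 1 := by
  rcases hf with rfl | rfl
  · exact (hsep b a hb ha).le
  · exact hmono.monotoneOn ha hb (hle rfl)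

theorem faithful_translator_is_best_response_general
    {X Z : Type*} (c v faith : X → Z → ℝ) (τ : X → Z) (cs : X → ℝ)
    (r : ℝ → ℝ → ℝ)
    (hfaith_val : ∀ x z, faith x z = 0 ∨ faith x z = 1)
    (hv : ∀ x z, v x z ∈ Set.Icc (0:ℝ) 1)
    (hcs : ∀ x, cs x = 0 ∨ cs x = 1)
    (hτ_faithful : ∀ x, faith x (τ x) = 1)
    (hcomplete : ∀ x, c x (τ x) = 1 → v x (τ x) = 1)
    (hsound : ∀ x z, c x z = 0 → v x z = 0)
    (hr_sep : ∀ v₁ v₂ : ℝ, v₁ ∈ Set.Icc (0:ℝ) 1 → v₂ ∈ Set.Icc (0:ℝ) 1 →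
      r v₁ 1 > r v₂ 0)
    (hr_mono : ∀ v₁ v₂ : ℝ, v₁ ∈ Set.Icc (0:ℝ) 1 → v₂ ∈ Set.Icc (0:ℝ) 1 →
      v₁ > v₂ → r v₁ 1 > r v₂ 1)
    (hsolver_correct : ∀ x, cs x = 1 → c x (τ x) = 1)
    (hsolver_incorrect : ∀ x, cs x = 0 → ∀ z, faith x z = 1 → c x z = 0) :
    ∀ x, ∀ z : Z, r (v x z) (faith x z) ≤ r (v x (τ x)) (faith x (τ x)) := by
  intro x z
  rw [hτ_faithful x]
  have hmono : StrictMonoOn (r · 1) (Icc 0 1) := fun a ha b hb hab => hr_mono b a hb ha hab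
  refine reward_le_of_faithful_le hr_sep hmono (hv x z) (hv x (τ x)) (hfaith_val x z)
    fun hfaithful => verifier_le_of_complete_of_sound (hv x) ?_ (hcomplete x) (hsound x z)
  rcases hcs x with hwrong | hright
  · exact Or.inr (hsolver_incorrect x hwrong z hfaithful)
  · exact Or.inl (hsolver_correct x hright)

/-- under completeness and soundness for `(v, τ)`, reward separation and
strict monotonicity of `r · 1`, and the solver-correctness dichotomy, the faithful
translator's output globally maximizes `z ↦ r (v x z) (faith x z)` for every `x`. -/
theorem faithful_translator_is_best_response
    {X Z : Type*} (c v faith : X → Z → ℝ) (τ : X → Z) (cs : X → ℝ)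
    (r : ℝ → ℝ → ℝ)
    (hc : ∀ x z, c x z = 0 ∨ c x z = 1)
    (hfaith_val : ∀ x z, faith x z = 0 ∨ faith x z = 1)
    (hv : ∀ x z, v x z ∈ Set.Icc (0:ℝ) 1)
    (hcs : ∀ x, cs x = 0 ∨ cs x = 1)
    (hτ_faithful : ∀ x, faith x (τ x) = 1)
    (hcomplete : ∀ x, c x (τ x) = 1 → v x (τ x) = 1)
    (hsound : ∀ x z, c x z = 0 → v x z = 0)
    (hr_sep : ∀ v₁ v₂ : ℝ, v₁ ∈ Set.Icc (0:ℝ) 1 → v₂ ∈ Set.Icc (0:ℝ) 1 →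
      r v₁ 1 > r v₂ 0)
    (hr_mono : ∀ v₁ v₂ : ℝ, v₁ ∈ Set.Icc (0:ℝ) 1 → v₂ ∈ Set.Icc (0:ℝ) 1 →
      v₁ > v₂ → r v₁ 1 > r v₂ 1)
    (hsolver_correct : ∀ x, cs x = 1 → c x (τ x) = 1)
    (hsolver_incorrect : ∀ x, cs x = 0 → ∀ z, faith x z = 1 → c x z = 0) :
    ∀ x, ∀ z : Z, r (v x z) (faith x z) ≤ r (v x (τ x)) (faith x (τ x)) :=
  faithful_translator_is_best_response_general c v faith τ cs r hfaith_val hv hcs hτ_faithful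
    hcomplete hsound hr_sep hr_mono hsolver_correct hsolver_incorrect
end

section
/- Suppose: (a) for all x, v(x, τ'(x)) = c(x, τ'(x)) (the verifier perfectly classifies the sneaky translator's outputs); (b) the sneaky translator τ' is a best response, meaning for all x and all z ∈ Z, r(v(x, τ'(x)), 1 - c(x, τ'(x))) ≥ r(v(x,z), 1 - c(x,z)); (c) r(v₁,1) > r(v₂,0) for all v₁,v₂ and r(·,1) is strictly increasing; (d) for every x there exists z with c(x,z) = 0. Then soundness holds: for all x and all z ∈ Z, c(x,z) = 0 implies v(x,z) = 0. -/
/-- if the verifier perfectly classifies the sneaky translator's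
outputs, the sneaky translator is a pointwise best response, the reward satisfies
strict separation and strict monotonicity in the aligned branch, and incorrect
outputs exist for each problem, then soundness holds. -/
theorem sneaky_best_response_implies_soundness
    {X Z : Type*} (c v : X → Z → ℝ) (τ' : X → Z) (r : ℝ → ℝ → ℝ)
    (hc : ∀ x z, c x z = 0 ∨ c x z = 1)
    (hv : ∀ x z, v x z ∈ Set.Icc (0:ℝ) 1)
    (ha : ∀ x, v x (τ' x) = c x (τ' x))
    (hb : ∀ x, ∀ z : Z,
      r (v x z) (1 - c x z) ≤ r (v x (τ' x)) (1 - c x (τ' x)))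
    (hr_sep : ∀ v₁ v₂ : ℝ, v₁ ∈ Set.Icc (0:ℝ) 1 → v₂ ∈ Set.Icc (0:ℝ) 1 →
      r v₁ 1 > r v₂ 0)
    (hr_mono : ∀ v₁ v₂ : ℝ, v₁ ∈ Set.Icc (0:ℝ) 1 → v₂ ∈ Set.Icc (0:ℝ) 1 →
      v₁ > v₂ → r v₁ 1 > r v₂ 1)
    (hd : ∀ x, ∃ z : Z, c x z = 0) :
    ∀ x, ∀ z : Z, c x z = 0 → v x z = 0 := by
  intro x z hcz
  -- First show c x (τ' x) = 0
  have hct : c x (τ' x) = 0 := by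
    rcases hc x (τ' x) with h | h
    · exact h
    · exfalso
      obtain ⟨z₀, hz₀⟩ := hd x
      have hbz := hb x z₀
      rw [hz₀, h] at hbz
      simp only [sub_zero, sub_self] at hbz
      exact absurd hbz (not_le.2 (hr_sep (v x z₀) (v x (τ' x)) (hv x z₀) (hv x (τ' x))))
  have hvt : v x (τ' x) = 0 := by rw [ha, hct]
  have hbz := hb x z
  rw [hcz, hct, hvt] at hbz
  simp only [sub_zero] at hbz
  by_contra hne
  have hpos : v x z > 0 := lt_of_le_of_ne (hv x z).1 (Ne.symm hne)
  exact absurd hbz (not_le.2 (hr_mono (v x z) 0 (hv x z) (by norm_num) hpos))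
end

section
/- Define a verifier-leading Stackelberg equilibrium (v*, τ*, τ'*) as: (1) τ* and τ'* are best responses to v* under rewards r(v*(x,z), faith(x,z)) and r(v*(x,z), 1-c(x,z)) respectively, pointwise for every x; and (2) v* maximizes R_V(v) = -(1/2)·(1/|X|)·Σ_x [l(v(x,τ_v(x)), c(x,τ_v(x))) + l(v(x,τ'_v(x)), c(x,τ'_v(x)))] where τ_v, τ'_v denote best responses to v (assume best responses to every v exist and R_V is well-defined for some fixed selection). Under the assumptions: X finite nonempty; l ≥ 0 with l(a,b)=0 iff a=b; r(v₁,1) > r(v₂,0) for all v₁,v₂ with r(·,1) strictly increasing; for every x there exists z with c(x,z)=0 and there exists z with faith(x,z)=1; and faith(x,z)=1 with solver-incorrect x implies c(x,z)=0 while faith(x,z)=1 with solver-correct x implies c(x,z)=1: there exists a tuple (v*, τ*, τ'*) that is a Stackelberg equilibrium and such that τ* is faithful, and (v*, τ*) satisfies completeness and soundness. -/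
/-!
The ideal verifier `v* = c` works. It incurs zero loss against every pair of translators,
while every verifier has utility `≤ 0`, so it maximizes `R_V`. Against it, all faithful
outputs for `x` have the same correctness (that of the solver on `x`), and every output
of indicator `1` beats every output of indicator `0` by reward separation; hence any
faithful translator is a best response. Likewise for the adversarial translator, which
maximizes `r (c x z) (1 - c x z)`: an incorrect output scores `r 0 1 > r 1 0`.
-/

open Finset Set

theorem mem_Icc_zero_one_of_eq_zero_or_eq_one {α : Type*} [Preorder α] [Zero α] [One α]
    [ZeroLEOneClass α] {a : α} (h : a = 0 ∨ a = 1) : a ∈ Icc (0 : α) 1 := by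
  rcases h with rfl | rfl
  exacts [⟨le_rfl, zero_le_one⟩, ⟨zero_le_one, le_rfl⟩]

theorem reward_le_reward_of_indicator_eq_one {Z β : Type*} [Preorder β] {r : ℝ → ℝ → β}
    (hr_sep : ∀ v₁ v₂ : ℝ, v₁ ∈ Icc (0 : ℝ) 1 → v₂ ∈ Icc (0 : ℝ) 1 → r v₁ 1 > r v₂ 0)
    {w f : Z → ℝ} (hw : ∀ z, w z ∈ Icc (0 : ℝ) 1) (hf : ∀ z, f z = 0 ∨ f z = 1)
    {z₀ : Z} (hz₀ : f z₀ = 1) (hw_eq : ∀ z, f z = 1 → w z = w z₀) (z : Z) :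
    r (w z) (f z) ≤ r (w z₀) (f z₀) := by
  rcases hf z with h | h
  · rw [h, hz₀]
    exact (hr_sep _ _ (hw z₀) (hw z)).le
  · rw [h, hz₀, hw_eq z h]

section VerifierUtility

variable {X Z : Type*} [Fintype X]

noncomputable def verifierUtility (l : ℝ → ℝ → ℝ) (c v : X → Z → ℝ) (σ σ' : X → Z) : ℝ :=
  -(1/2) * (1 / (Fintype.card X : ℝ)) *
    ∑ x : X, (l (v x (σ x)) (c x (σ x)) + l (v x (σ' x)) (c x (σ' x)))

theorem verifierUtility_nonpos {l : ℝ → ℝ → ℝ} (hl_nonneg : ∀ a b, 0 ≤ l a b)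
    (c v : X → Z → ℝ) (σ σ' : X → Z) : verifierUtility l c v σ σ' ≤ 0 := by
  have hsum : 0 ≤ ∑ x : X, (l (v x (σ x)) (c x (σ x)) + l (v x (σ' x)) (c x (σ' x))) :=
    sum_nonneg fun x _ => add_nonneg (hl_nonneg _ _) (hl_nonneg _ _)
  have hcoef : -(1/2) * (1 / (Fintype.card X : ℝ)) ≤ 0 := by
    have : (0 : ℝ) ≤ 1 / (Fintype.card X : ℝ) := by positivity
    linarith
  exact mul_nonpos_of_nonpos_of_nonneg hcoef hsum

theorem verifierUtility_self {l : ℝ → ℝ → ℝ} (hl_refl : ∀ a, l a a = 0)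
    (c : X → Z → ℝ) (σ σ' : X → Z) : verifierUtility l c c σ σ' = 0 := by
  simp [verifierUtility, hl_refl]

end VerifierUtility

theorem decoupled_pvg_equilibrium_exists_general
    {X Z : Type*} [Fintype X]
    (c faith : X → Z → ℝ) (cs : X → ℝ)
    (l r : ℝ → ℝ → ℝ)
    -- value constraints
    (hc : ∀ x z, c x z = 0 ∨ c x z = 1)
    (hfaith_val : ∀ x z, faith x z = 0 ∨ faith x z = 1)
    (hcs : ∀ x, cs x = 0 ∨ cs x = 1)
    -- loss assumptions
    (hl_nonneg : ∀ a b, 0 ≤ l a b)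
    (hl_zero : ∀ a b, l a b = 0 ↔ a = b)
    -- reward assumptions
    (hr_sep : ∀ v₁ v₂ : ℝ, v₁ ∈ Set.Icc (0:ℝ) 1 → v₂ ∈ Set.Icc (0:ℝ) 1 →
      r v₁ 1 > r v₂ 0)
    -- richness of the output space
    (hex_incorrect : ∀ x, ∃ z : Z, c x z = 0)
    (hex_faithful : ∀ x, ∃ z : Z, faith x z = 1)
    -- faithfulness/correctness dichotomy with respect to the solver
    (hsolver_incorrect : ∀ x, cs x = 0 → ∀ z, faith x z = 1 → c x z = 0)
    (hsolver_correct : ∀ x, cs x = 1 → ∀ z, faith x z = 1 → c x z = 1)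
    -- a fixed selection of best responses to every verifier
    (selτ selτ' : (X → Z → ℝ) → X → Z)
    -- the verifier utility, for a verifier together with a pair of translators
    (RV : (X → Z → ℝ) → (X → Z) → (X → Z) → ℝ)
    (hRV : ∀ (v : X → Z → ℝ) (σ σ' : X → Z),
      RV v σ σ' = -(1/2) * (1 / (Fintype.card X : ℝ)) *
        ∑ x : X, (l (v x (σ x)) (c x (σ x)) + l (v x (σ' x)) (c x (σ' x)))) :
    ∃ (vs : X → Z → ℝ) (τs τs' : X → Z),
      (∀ x z, vs x z ∈ Set.Icc (0:ℝ) 1) ∧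
      -- (1) τ* and τ'* are pointwise best responses to v*
      (∀ x, ∀ z : Z,
        r (vs x z) (faith x z) ≤ r (vs x (τs x)) (faith x (τs x))) ∧
      (∀ x, ∀ z : Z,
        r (vs x z) (1 - c x z) ≤ r (vs x (τs' x)) (1 - c x (τs' x))) ∧
      -- (2) v* maximizes R_V over all verifiers (with the fixed selection of
      -- best responses to the other verifiers)
      (∀ v : X → Z → ℝ, (∀ x z, v x z ∈ Set.Icc (0:ℝ) 1) →
        RV v (selτ v) (selτ' v) ≤ RV vs τs τs') ∧
      -- τ* is faithful
      (∀ x, faith x (τs x) = 1) ∧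
      -- completeness for (v*, τ*)
      (∀ x, c x (τs x) = 1 → vs x (τs x) = 1) ∧
      -- soundness for v*
      (∀ x, ∀ z : Z, c x z = 0 → vs x z = 0) := by
  choose τs hτs using hex_faithful
  choose τs' hτs' using hex_incorrect
  have hc_Icc : ∀ x z, c x z ∈ Icc (0 : ℝ) 1 := fun x z =>
    mem_Icc_zero_one_of_eq_zero_or_eq_one (hc x z)
  have hc_faithful : ∀ x z, faith x z = 1 → c x z = c x (τs x) := by
    intro x z hz
    rcases hcs x with hs | hs
    · rw [hsolver_incorrect x hs z hz, hsolver_incorrect x hs _ (hτs x)]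
    · rw [hsolver_correct x hs z hz, hsolver_correct x hs _ (hτs x)]
  have hincorrect : ∀ x z, 1 - c x z = 0 ∨ 1 - c x z = 1 := fun x z => by
    rcases hc x z with h | h <;> simp [h]
  refine ⟨c, τs, τs', hc_Icc,
    fun x => reward_le_reward_of_indicator_eq_one hr_sep (hc_Icc x) (hfaith_val x) (hτs x)
      (hc_faithful x),
    fun x => reward_le_reward_of_indicator_eq_one hr_sep (hc_Icc x) (hincorrect x)
      (by rw [hτs' x]; norm_num) (fun z hz => by rw [hτs' x]; linarith),
    fun v _ => ?_, hτs, fun _ h => h, fun _ _ h => h⟩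
  rw [hRV, hRV]
  exact (verifierUtility_nonpos hl_nonneg c v _ _).trans
    (verifierUtility_self (fun a => (hl_zero a a).mpr rfl) c τs τs').ge

/-- sufficiency direction of Theorem 1: under the stated assumptions
there exists a verifier-leading Stackelberg equilibrium `(v*, τ*, τ'*)` such that
`τ*` is faithful and `(v*, τ*)` satisfies completeness and soundness. The verifier's
utility `R_V` is defined via a fixed selection `selτ, selτ'` of best responses to
every verifier (assumed to exist). -/
theorem decoupled_pvg_equilibrium_exists
    {X Z : Type*} [Fintype X] [Nonempty X]
    (c faith : X → Z → ℝ) (cs : X → ℝ)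
    (l r : ℝ → ℝ → ℝ)
    -- value constraints
    (hc : ∀ x z, c x z = 0 ∨ c x z = 1)
    (hfaith_val : ∀ x z, faith x z = 0 ∨ faith x z = 1)
    (hcs : ∀ x, cs x = 0 ∨ cs x = 1)
    -- loss assumptions
    (hl_nonneg : ∀ a b, 0 ≤ l a b)
    (hl_zero : ∀ a b, l a b = 0 ↔ a = b)
    -- reward assumptions
    (hr_sep : ∀ v₁ v₂ : ℝ, v₁ ∈ Set.Icc (0:ℝ) 1 → v₂ ∈ Set.Icc (0:ℝ) 1 →
      r v₁ 1 > r v₂ 0)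
    (hr_mono : ∀ v₁ v₂ : ℝ, v₁ ∈ Set.Icc (0:ℝ) 1 → v₂ ∈ Set.Icc (0:ℝ) 1 →
      v₁ > v₂ → r v₁ 1 > r v₂ 1)
    -- richness of the output space
    (hex_incorrect : ∀ x, ∃ z : Z, c x z = 0)
    (hex_faithful : ∀ x, ∃ z : Z, faith x z = 1)
    -- faithfulness/correctness dichotomy with respect to the solver
    (hsolver_incorrect : ∀ x, cs x = 0 → ∀ z, faith x z = 1 → c x z = 0)
    (hsolver_correct : ∀ x, cs x = 1 → ∀ z, faith x z = 1 → c x z = 1)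
    -- a fixed selection of best responses to every verifier
    (selτ selτ' : (X → Z → ℝ) → X → Z)
    (hselτ : ∀ v : X → Z → ℝ, (∀ x z, v x z ∈ Set.Icc (0:ℝ) 1) →
      ∀ x, ∀ z : Z, r (v x z) (faith x z) ≤ r (v x (selτ v x)) (faith x (selτ v x)))
    (hselτ' : ∀ v : X → Z → ℝ, (∀ x z, v x z ∈ Set.Icc (0:ℝ) 1) →
      ∀ x, ∀ z : Z,
        r (v x z) (1 - c x z) ≤ r (v x (selτ' v x)) (1 - c x (selτ' v x)))
    -- the verifier utility, for a verifier together with a pair of translators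
    (RV : (X → Z → ℝ) → (X → Z) → (X → Z) → ℝ)
    (hRV : ∀ (v : X → Z → ℝ) (σ σ' : X → Z),
      RV v σ σ' = -(1/2) * (1 / (Fintype.card X : ℝ)) *
        ∑ x : X, (l (v x (σ x)) (c x (σ x)) + l (v x (σ' x)) (c x (σ' x)))) :
    ∃ (vs : X → Z → ℝ) (τs τs' : X → Z),
      (∀ x z, vs x z ∈ Set.Icc (0:ℝ) 1) ∧
      -- (1) τ* and τ'* are pointwise best responses to v*
      (∀ x, ∀ z : Z,
        r (vs x z) (faith x z) ≤ r (vs x (τs x)) (faith x (τs x))) ∧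
      (∀ x, ∀ z : Z,
        r (vs x z) (1 - c x z) ≤ r (vs x (τs' x)) (1 - c x (τs' x))) ∧
      -- (2) v* maximizes R_V over all verifiers (with the fixed selection of
      -- best responses to the other verifiers)
      (∀ v : X → Z → ℝ, (∀ x z, v x z ∈ Set.Icc (0:ℝ) 1) →
        RV v (selτ v) (selτ' v) ≤ RV vs τs τs') ∧
      -- τ* is faithful
      (∀ x, faith x (τs x) = 1) ∧
      -- completeness for (v*, τ*)
      (∀ x, c x (τs x) = 1 → vs x (τs x) = 1) ∧
      -- soundness for v*
      (∀ x, ∀ z : Z, c x z = 0 → vs x z = 0) :=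
  decoupled_pvg_equilibrium_exists_general c faith cs l r hc hfaith_val hcs hl_nonneg hl_zero hr_sep
    hex_incorrect hex_faithful hsolver_incorrect hsolver_correct selτ selτ' RV hRV
end

section
/- Under the same setup as the decoupled prover-verifier game, if (v*, τ*, τ'*) is a verifier-leading Stackelberg equilibrium in which R_V(v*) = 0 (the verifier achieves the maximal utility 0), then: (i) completeness holds for (v*, τ*); (ii) soundness holds for v*: for all x, z, c(x,z)=0 implies v*(x,z)=0; and (iii) τ* is faithful: faith(x, τ*(x)) = 1 for all x. -/
/-!
Zero verifier utility forces zero loss at every input, so `v*` agrees with `c` on the outputs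
of both provers. Since a label-`1` reward beats every label-`0` reward, a best response for
rewards `r(v, 1 - c)` that does at least as well as an incorrect solution `z` is itself
incorrect, hence scored `0`; monotonicity of `r(·, 1)` then forces `v*(x, z) = 0`.
The same separation argument makes the best response for rewards `r(v, faith)` faithful.
-/

open Set

theorem eq_zero_of_mul_inv_card_mul_sum_eq_zero {X : Type*} [Fintype X] {f : X → ℝ}
    (hf : ∀ x, 0 ≤ f x) {a : ℝ} (ha : a ≠ 0)
    (h : a * (1 / (Fintype.card X : ℝ)) * ∑ x, f x = 0) (x : X) : f x = 0 := by
  have hcard : (Fintype.card X : ℝ) ≠ 0 := by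
    exact_mod_cast (Fintype.card_pos_iff.mpr ⟨x⟩).ne'
  have hsum : ∑ x, f x = 0 := by simpa [ha, hcard] using h
  exact (Finset.sum_eq_zero_iff_of_nonneg fun x _ ↦ hf x).mp hsum x (Finset.mem_univ x)

section Reward

variable {r : ℝ → ℝ → ℝ}

theorem eq_one_of_reward_one_le
    (hr_sep : ∀ v₁ v₂ : ℝ, v₁ ∈ Icc (0:ℝ) 1 → v₂ ∈ Icc (0:ℝ) 1 → r v₂ 0 < r v₁ 1)
    {v₁ v₂ b : ℝ} (hv₁ : v₁ ∈ Icc (0:ℝ) 1) (hv₂ : v₂ ∈ Icc (0:ℝ) 1) (hb : b = 0 ∨ b = 1)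
    (h : r v₁ 1 ≤ r v₂ b) : b = 1 := by
  rcases hb with rfl | rfl
  · exact absurd h (hr_sep v₁ v₂ hv₁ hv₂).not_ge
  · rfl

theorem eq_zero_of_reward_one_le_reward_zero
    (hr_mono : ∀ v₁ v₂ : ℝ, v₁ ∈ Icc (0:ℝ) 1 → v₂ ∈ Icc (0:ℝ) 1 → v₂ < v₁ → r v₂ 1 < r v₁ 1)
    {v : ℝ} (hv : v ∈ Icc (0:ℝ) 1) (h : r v 1 ≤ r 0 1) : v = 0 := by
  by_contra hne
  have hpos : 0 < v := lt_of_le_of_ne hv.1 (Ne.symm hne)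
  exact h.not_gt (hr_mono v 0 hv ⟨le_rfl, zero_le_one⟩ hpos)

theorem eq_zero_of_incorrect_of_bestResponse {Z : Type*}
    (hr_sep : ∀ v₁ v₂ : ℝ, v₁ ∈ Icc (0:ℝ) 1 → v₂ ∈ Icc (0:ℝ) 1 → r v₂ 0 < r v₁ 1)
    (hr_mono : ∀ v₁ v₂ : ℝ, v₁ ∈ Icc (0:ℝ) 1 → v₂ ∈ Icc (0:ℝ) 1 → v₂ < v₁ → r v₂ 1 < r v₁ 1)
    {v c : Z → ℝ} {zs : Z} (hv : ∀ z, v z ∈ Icc (0:ℝ) 1) (hc : c zs = 0 ∨ c zs = 1)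
    (hv_zs : v zs = c zs) (hbr : ∀ z, r (v z) (1 - c z) ≤ r (v zs) (1 - c zs))
    {z : Z} (hz : c z = 0) : v z = 0 := by
  have hbr_z : r (v z) 1 ≤ r (v zs) (1 - c zs) := by simpa [hz] using hbr z
  have hc_zs : c zs = 0 := by
    have := eq_one_of_reward_one_le hr_sep (hv z) (hv zs)
      (by rcases hc with h | h <;> simp [h]) hbr_z
    linarith
  rw [hv_zs, hc_zs, sub_zero] at hbr_z
  exact eq_zero_of_reward_one_le_reward_zero hr_mono (hv z) hbr_z

end Reward

theorem equilibrium_implies_complete_sound_faithful_general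
    {X Z : Type*} [Fintype X]
    (c faith : X → Z → ℝ) (vs : X → Z → ℝ) (τs τs' : X → Z)
    (l r : ℝ → ℝ → ℝ)
    (hc : ∀ x z, c x z = 0 ∨ c x z = 1)
    (hfaith_val : ∀ x z, faith x z = 0 ∨ faith x z = 1)
    (hv : ∀ x z, vs x z ∈ Set.Icc (0:ℝ) 1)
    (hl_nonneg : ∀ a b, 0 ≤ l a b)
    (hl_zero : ∀ a b, l a b = 0 ↔ a = b)
    (hr_sep : ∀ v₁ v₂ : ℝ, v₁ ∈ Set.Icc (0:ℝ) 1 → v₂ ∈ Set.Icc (0:ℝ) 1 →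
      r v₁ 1 > r v₂ 0)
    (hr_mono : ∀ v₁ v₂ : ℝ, v₁ ∈ Set.Icc (0:ℝ) 1 → v₂ ∈ Set.Icc (0:ℝ) 1 →
      v₁ > v₂ → r v₁ 1 > r v₂ 1)
    (hex_faithful : ∀ x, ∃ z : Z, faith x z = 1)
    -- τ* and τ'* are pointwise best responses to v*
    (hbrτ : ∀ x, ∀ z : Z,
      r (vs x z) (faith x z) ≤ r (vs x (τs x)) (faith x (τs x)))
    (hbrτ' : ∀ x, ∀ z : Z,
      r (vs x z) (1 - c x z) ≤ r (vs x (τs' x)) (1 - c x (τs' x)))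
    -- the verifier achieves the maximal utility 0
    (hRV_zero : -(1/2) * (1 / (Fintype.card X : ℝ)) *
      ∑ x : X, (l (vs x (τs x)) (c x (τs x)) +
        l (vs x (τs' x)) (c x (τs' x))) = 0) :
    -- (i) completeness for (v*, τ*)
    (∀ x, c x (τs x) = 1 → vs x (τs x) = 1) ∧
    -- (ii) soundness for v*
    (∀ x, ∀ z : Z, c x z = 0 → vs x z = 0) ∧
    -- (iii) τ* is faithful
    (∀ x, faith x (τs x) = 1) := by
  have hloss := eq_zero_of_mul_inv_card_mul_sum_eq_zero
    (fun x ↦ add_nonneg (hl_nonneg _ _) (hl_nonneg _ _)) (by norm_num) hRV_zero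
  have hexact : ∀ x, vs x (τs x) = c x (τs x) ∧ vs x (τs' x) = c x (τs' x) := fun x ↦ by
    obtain ⟨h, h'⟩ := (add_eq_zero_iff_of_nonneg (hl_nonneg _ _) (hl_nonneg _ _)).mp (hloss x)
    exact ⟨(hl_zero _ _).mp h, (hl_zero _ _).mp h'⟩
  refine ⟨fun x h ↦ (hexact x).1.trans h, fun x z hz ↦ ?_, fun x ↦ ?_⟩
  · exact eq_zero_of_incorrect_of_bestResponse hr_sep hr_mono (hv x) (hc x (τs' x))
      (hexact x).2 (hbrτ' x) hz
  · obtain ⟨z, hz⟩ := hex_faithful x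
    exact eq_one_of_reward_one_le hr_sep (hv x z) (hv x _) (hfaith_val x _) (hz ▸ hbrτ x z)

/-- necessity direction of Theorem 1: if `(v*, τ*, τ'*)` is a
verifier-leading Stackelberg equilibrium in which the verifier achieves the maximal
utility `R_V(v*) = 0`, then completeness, soundness, and faithfulness hold. -/
theorem equilibrium_implies_complete_sound_faithful
    {X Z : Type*} [Fintype X] [Nonempty X]
    (c faith : X → Z → ℝ) (vs : X → Z → ℝ) (τs τs' : X → Z)
    (l r : ℝ → ℝ → ℝ)
    (hc : ∀ x z, c x z = 0 ∨ c x z = 1)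
    (hfaith_val : ∀ x z, faith x z = 0 ∨ faith x z = 1)
    (hv : ∀ x z, vs x z ∈ Set.Icc (0:ℝ) 1)
    (hl_nonneg : ∀ a b, 0 ≤ l a b)
    (hl_zero : ∀ a b, l a b = 0 ↔ a = b)
    (hr_sep : ∀ v₁ v₂ : ℝ, v₁ ∈ Set.Icc (0:ℝ) 1 → v₂ ∈ Set.Icc (0:ℝ) 1 →
      r v₁ 1 > r v₂ 0)
    (hr_mono : ∀ v₁ v₂ : ℝ, v₁ ∈ Set.Icc (0:ℝ) 1 → v₂ ∈ Set.Icc (0:ℝ) 1 →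
      v₁ > v₂ → r v₁ 1 > r v₂ 1)
    (hex_incorrect : ∀ x, ∃ z : Z, c x z = 0)
    (hex_faithful : ∀ x, ∃ z : Z, faith x z = 1)
    -- τ* and τ'* are pointwise best responses to v*
    (hbrτ : ∀ x, ∀ z : Z,
      r (vs x z) (faith x z) ≤ r (vs x (τs x)) (faith x (τs x)))
    (hbrτ' : ∀ x, ∀ z : Z,
      r (vs x z) (1 - c x z) ≤ r (vs x (τs' x)) (1 - c x (τs' x)))
    -- the verifier achieves the maximal utility 0
    (hRV_zero : -(1/2) * (1 / (Fintype.card X : ℝ)) *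
      ∑ x : X, (l (vs x (τs x)) (c x (τs x)) +
        l (vs x (τs' x)) (c x (τs' x))) = 0) :
    -- (i) completeness for (v*, τ*)
    (∀ x, c x (τs x) = 1 → vs x (τs x) = 1) ∧
    -- (ii) soundness for v*
    (∀ x, ∀ z : Z, c x z = 0 → vs x z = 0) ∧
    -- (iii) τ* is faithful
    (∀ x, faith x (τs x) = 1) :=
  equilibrium_implies_complete_sound_faithful_general c faith vs τs τs' l r hc hfaith_val hv
    hl_nonneg hl_zero hr_sep hr_mono hex_faithful hbrτ hbrτ' hRV_zero
end

section
/- Suppose the verifier achieves R_V = 0 but soundness fails: there exist x₀ and z₀ with c(x₀,z₀) = 0 and v(x₀,z₀) > 0. Assume the sneaky translator τ' is a pointwise best response to v under reward r(v(x,z), 1-c(x,z)), with r(v₁,1) > r(v₂,0) for all v₁,v₂ and r(·,1) strictly increasing. Then we derive a contradiction: since R_V=0 forces v(x₀,τ'(x₀)) = c(x₀,τ'(x₀)), either c(x₀,τ'(x₀)) = 1 (in which case switching to z₀ gives 1-c = 1 and strictly larger reward r(v(x₀,z₀),1) > r(v(x₀,τ'(x₀)),0)), or c(x₀,τ'(x₀))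 = 0 and v(x₀,τ'(x₀)) = 0 (in which case r(v(x₀,z₀),1) > r(0,1) by strict monotonicity since v(x₀,z₀) > 0). Hence no such configuration exists, i.e., R_V = 0 together with τ' being a best response implies soundness. -/
open Set

/-- On an answer where the verifier is exact (`a = c = v ∈ {0, 1}`) the reward is `r 0 1` or
`r 1 0`; a positive verifier score on an incorrect answer beats both. -/
lemma reward_of_exact_lt_of_pos {r : ℝ → ℝ → ℝ}
    (hr_sep : ∀ v₁ v₂ : ℝ, v₁ ∈ Icc (0:ℝ) 1 → v₂ ∈ Icc (0:ℝ) 1 → r v₁ 1 > r v₂ 0)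
    (hr_mono : ∀ v₁ v₂ : ℝ, v₁ ∈ Icc (0:ℝ) 1 → v₂ ∈ Icc (0:ℝ) 1 → v₁ > v₂ → r v₁ 1 > r v₂ 1)
    {w a : ℝ} (hw : w ∈ Icc (0:ℝ) 1) (hw_pos : 0 < w) (ha : a = 0 ∨ a = 1) :
    r a (1 - a) < r w 1 := by
  rcases ha with rfl | rfl
  · simpa using hr_mono w 0 hw (left_mem_Icc.2 zero_le_one) hw_pos
  · simpa using hr_sep w 1 hw (right_mem_Icc.2 zero_le_one)

theorem zero_loss_best_response_implies_soundness_general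
    {X Z : Type*}
    (c v : X → Z → ℝ) (τ τ' : X → Z) (r : ℝ → ℝ → ℝ)
    (hc : ∀ x z, c x z = 0 ∨ c x z = 1)
    (hv : ∀ x z, v x z ∈ Set.Icc (0:ℝ) 1)
    -- R_V = 0: the verifier agrees with c on all outputs of τ and τ'
    (hRV : ∀ x, v x (τ x) = c x (τ x) ∧ v x (τ' x) = c x (τ' x))
    -- τ' is a pointwise best response
    (hbr : ∀ x, ∀ z : Z,
      r (v x z) (1 - c x z) ≤ r (v x (τ' x)) (1 - c x (τ' x)))
    (hr_sep : ∀ v₁ v₂ : ℝ, v₁ ∈ Set.Icc (0:ℝ) 1 → v₂ ∈ Set.Icc (0:ℝ) 1 →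
      r v₁ 1 > r v₂ 0)
    (hr_mono : ∀ v₁ v₂ : ℝ, v₁ ∈ Set.Icc (0:ℝ) 1 → v₂ ∈ Set.Icc (0:ℝ) 1 →
      v₁ > v₂ → r v₁ 1 > r v₂ 1) :
    ∀ x : X, ∀ z : Z, c x z = 0 → v x z = 0 := by
  intro x z hcz
  by_contra hvz
  have hpos : 0 < v x z := (hv x z).1.lt_of_ne' hvz
  have hbest := hbr x z
  rw [hcz, sub_zero, (hRV x).2] at hbest
  exact (reward_of_exact_lt_of_pos hr_sep hr_mono (hv x z) hpos (hc x (τ' x))).not_ge hbest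

/-- if the verifier achieves `R_V = 0` (i.e. it agrees with the
correctness indicator on the outputs of both translators) and the sneaky translator
is a pointwise best response under a reward with strict separation and strict
monotonicity in the aligned branch, then soundness must hold: there is no `x₀, z₀`
with `c(x₀,z₀) = 0` and `v(x₀,z₀) > 0`. -/
theorem zero_loss_best_response_implies_soundness
    {X Z : Type*} [Fintype X] [Nonempty X]
    (c v : X → Z → ℝ) (τ τ' : X → Z) (r : ℝ → ℝ → ℝ)
    (hc : ∀ x z, c x z = 0 ∨ c x z = 1)
    (hv : ∀ x z, v x z ∈ Set.Icc (0:ℝ) 1)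
    -- R_V = 0: the verifier agrees with c on all outputs of τ and τ'
    (hRV : ∀ x, v x (τ x) = c x (τ x) ∧ v x (τ' x) = c x (τ' x))
    -- τ' is a pointwise best response
    (hbr : ∀ x, ∀ z : Z,
      r (v x z) (1 - c x z) ≤ r (v x (τ' x)) (1 - c x (τ' x)))
    (hr_sep : ∀ v₁ v₂ : ℝ, v₁ ∈ Set.Icc (0:ℝ) 1 → v₂ ∈ Set.Icc (0:ℝ) 1 →
      r v₁ 1 > r v₂ 0)
    (hr_mono : ∀ v₁ v₂ : ℝ, v₁ ∈ Set.Icc (0:ℝ) 1 → v₂ ∈ Set.Icc (0:ℝ) 1 →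
      v₁ > v₂ → r v₁ 1 > r v₂ 1) :
    ∀ x : X, ∀ z : Z, c x z = 0 → v x z = 0 :=
  zero_loss_best_response_implies_soundness_general c v τ τ' r hc hv hRV hbr hr_sep hr_mono
end
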